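/- Let r, b : ℝ → ℝ be continuous 1-periodic functions, let k ∈ ℝ, and let φ : ℝ → ℝ be twice continuously differentiable, 1-periodic, positive on ℝ, satisfying φ'' + b φ' + r φ = k φ on ℝ. Let x₁ < x₂ be real numbers, let k_d ∈ ℝ, and let ψ : [x₁,x₂] → ℝ be twice continuously differentiable, positive on (x₁,x₂), with ψ(x₁) = ψ(x₂) = 0, satisfying ψ'' + b ψ' + r ψ = k_d ψ on [x₁,x₂]. Then k_d < k. -/

import Mathlib

/-!
Write `ψ = W φ`. Since `φ > 0` solves `φ'' + bφ' + rφ = kφ`, the quotient `W`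
solves `W'' + (2φ'/φ + b) W' = (k_d - k) W` on `[x₁,x₂]`, vanishes at both ends and is positive
inside. At an interior maximum `c` of `W` we have `W' = 0` and `W'' ≤ 0`, hence `k_d ≤ k`.
If `k_d = k`, then `W'` solves a first-order linear equation with `W'(c) = 0`, so Grönwall forces
`W' ≡ 0` on `[c, x₂]`, contradicting `W(c) > 0 = W(x₂)`.
-/

open Set Topology

theorem IsLocalMax.deriv_deriv_nonpos {f : ℝ → ℝ} {c : ℝ} (h : IsLocalMax f c)
    (hc : ContinuousAt f c) : deriv (deriv f) c ≤ 0 := by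
  by_contra! hpos
  -- By the second-derivative test `c` is also a local minimum, so `f` is locally constant.
  have hmin := isLocalMin_of_deriv_deriv_pos hpos h.deriv_eq_zero hc
  have hconst : ∀ᶠ x in 𝓝 c, f =ᶠ[𝓝 x] fun _ => f c :=
    ((hmin.and h).mono fun _ hx => le_antisymm hx.2 hx.1).eventually_nhds
  have hderiv : deriv f =ᶠ[𝓝 c] fun _ => 0 :=
    hconst.mono fun _ hx => by rw [hx.deriv_eq, deriv_const]
  simp [hderiv.deriv_eq] at hpos

theorem deriv_deriv_mul {f g : ℝ → ℝ} (hf : ContDiff ℝ 2 f) (hg : ContDiff ℝ 2 g) (x : ℝ) :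
    deriv (deriv fun y => f y * g y) x =
      deriv (deriv f) x * g x + 2 * deriv f x * deriv g x + f x * deriv (deriv g) x := by
  have hf1 : Differentiable ℝ f := hf.differentiable two_ne_zero
  have hg1 : Differentiable ℝ g := hg.differentiable two_ne_zero
  have hfg : deriv (fun y => f y * g y) = fun y => deriv f y * g y + f y * deriv g y :=
    funext fun y => deriv_fun_mul (hf1 y) (hg1 y)
  have hsum := ((hf.differentiable_deriv_two x).hasDerivAt.fun_mul (hg1 x).hasDerivAt).fun_add
    ((hf1 x).hasDerivAt.fun_mul (hg.differentiable_deriv_two x).hasDerivAt)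
  rw [hfg, hsum.deriv]
  ring

theorem exists_mem_Ioo_isMaxOn_pos {f : ℝ → ℝ} {a b : ℝ} (hf : ContinuousOn f (Icc a b))
    (ha : f a = 0) (hb : f b = 0) (hpos : ∃ x ∈ Ioo a b, 0 < f x) :
    ∃ c ∈ Ioo a b, IsMaxOn f (Icc a b) c ∧ 0 < f c := by
  obtain ⟨x, hx, hfx⟩ := hpos
  obtain ⟨c, hc, hmax⟩ :=
    isCompact_Icc.exists_isMaxOn (nonempty_Icc.mpr (hx.1.trans hx.2).le) hf
  have hfc : 0 < f c := hfx.trans_le (hmax (Ioo_subset_Icc_self hx))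
  refine ⟨c, ⟨hc.1.lt_of_ne ?_, hc.2.lt_of_ne ?_⟩, hmax, hfc⟩ <;> rintro rfl <;> simp_all

theorem dirichlet_eigenvalue_neg {W B : ℝ → ℝ} {a b μ : ℝ} (hW : ContDiff ℝ 2 W)
    (hB : ContinuousOn B (Icc a b)) (ha : W a = 0) (hb : W b = 0)
    (hpos : ∃ x ∈ Ioo a b, 0 < W x)
    (heq : ∀ x ∈ Icc a b, deriv (deriv W) x + B x * deriv W x = μ * W x) : μ < 0 := by
  obtain ⟨c, hc, hmax, hWc⟩ := exists_mem_Ioo_isMaxOn_pos hW.continuous.continuousOn ha hb hpos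
  have hcIcc : c ∈ Icc a b := Ioo_subset_Icc_self hc
  have hloc : IsLocalMax W c := hmax.isLocalMax (Icc_mem_nhds hc.1 hc.2)
  have hW'c : deriv W c = 0 := hloc.deriv_eq_zero
  have hμ_le : μ ≤ 0 := by
    have h := heq c hcIcc
    rw [hW'c, mul_zero, add_zero] at h
    nlinarith [hloc.deriv_deriv_nonpos hW.continuous.continuousAt]
  refine hμ_le.lt_of_ne fun hμ => ?_
  subst hμ
  have hcb : Icc c b ⊆ Icc a b := Icc_subset_Icc_left hc.1.le
  obtain ⟨K, hK⟩ := isCompact_Icc.exists_bound_of_continuousOn hB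
  have hW'_zero : ∀ x ∈ Icc c b, deriv W x = 0 := by
    refine eq_zero_of_abs_deriv_le_mul_abs_self_of_eq_zero_right (f' := deriv (deriv W)) (K := K)
      (hW.continuous_deriv one_le_two).continuousOn ?_ hW'c ?_
    · exact fun x _ => (hW.differentiable_deriv_two x).hasDerivAt.hasDerivWithinAt
    · intro x hx
      have hx' := hcb (Ico_subset_Icc_self hx)
      rw [eq_neg_of_add_eq_zero_left ((heq x hx').trans (zero_mul _)), norm_neg, norm_mul]
      exact mul_le_mul_of_nonneg_right (hK x hx') (norm_nonneg _)
  have hconst := constant_of_has_deriv_right_zero hW.continuous.continuousOn fun x hx =>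
    hW'_zero x (Ico_subset_Icc_self hx) ▸
      (hW.differentiable two_ne_zero x).hasDerivAt.hasDerivWithinAt
  have := hconst b (right_mem_Icc.mpr hc.2.le)
  linarith

theorem stmt15 (r b : ℝ → ℝ) (k : ℝ)
    (hb : Continuous b)
    (φ : ℝ → ℝ) (hφ : ContDiff ℝ 2 φ)
    (hφpos : ∀ x, 0 < φ x)
    (heqφ : ∀ x : ℝ,
      deriv (deriv φ) x + b x * deriv φ x + r x * φ x = k * φ x)
    (x₁ x₂ : ℝ) (hx : x₁ < x₂) (kd : ℝ)
    (ψ : ℝ → ℝ) (hψ : ContDiff ℝ 2 ψ)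
    (hψpos : ∀ x ∈ Set.Ioo x₁ x₂, 0 < ψ x)
    (hψbd : ψ x₁ = 0 ∧ ψ x₂ = 0)
    (heqψ : ∀ x ∈ Set.Icc x₁ x₂,
      deriv (deriv ψ) x + b x * deriv ψ x + r x * ψ x = kd * ψ x) :
    kd < k := by
  have hφne : ∀ x, φ x ≠ 0 := fun x => (hφpos x).ne'
  set W : ℝ → ℝ := fun x => ψ x / φ x
  have hW : ContDiff ℝ 2 W := hψ.div hφ hφne
  have hψW : ψ = fun x => W x * φ x := funext fun x => (div_mul_cancel₀ _ (hφne x)).symm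
  have hW₁ : W x₁ = 0 := by simp [W, hψbd.1]
  have hW₂ : W x₂ = 0 := by simp [W, hψbd.2]
  have hmid : (x₁ + x₂) / 2 ∈ Ioo x₁ x₂ := ⟨by linarith, by linarith⟩
  have hWmid : 0 < W ((x₁ + x₂) / 2) := div_pos (hψpos _ hmid) (hφpos _)
  clear_value W
  have hB : Continuous fun x => 2 * deriv φ x / φ x + b x :=
    ((continuous_const.mul (hφ.continuous_deriv one_le_two)).div hφ.continuous hφne).add hb
  suffices kd - k < 0 by linarith
  refine dirichlet_eigenvalue_neg hW hB.continuousOn hW₁ hW₂ ⟨_, hmid, hWmid⟩ fun x hx => ?_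
  have hψx := heqψ x hx
  rw [hψW, deriv_deriv_mul hW hφ,
    deriv_fun_mul (hW.differentiable two_ne_zero x) (hφ.differentiable two_ne_zero x)] at hψx
  have hφx := hφne x
  field_simp
  linear_combination hψx - W x * heqφ x
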